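/- arXiv:1407.1662 — 2 statements merged into one kernel-verified Lean document; each statement's English description precedes it below -/
import Mathlib

section
/- Let W be the block-diagonal graphon with parameter 0 < α ≤ 1: W(x,y) = 1/α² if 0 ≤ x,y ≤ α and W(x,y) = 0 otherwise. Let 0 ≤ h ≤ 1 with 1 − α ≥ h. Then for every q ≥ 1 and symmetric q×q matrix J, the lower threshold ground state energy with threshold c = h/q equals the unrestricted ground state energy of the constant-1 graphon: E^{h/q}(W, J) = E(𝟙, J), where 𝟙 denotes the graphon identically equal to 1 and E(𝟙,J) = inf over all q-fractional partitions ρ of −Σ_{i,j} J_{ij} ∫∫ ρ_i(x)ρ_j(y) dx dy. -/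
open MeasureTheory Filter

noncomputable section

/-- The unit interval as a subset of ℝ. -/
def I01 : Set ℝ := Set.Icc 0 1

/-- A `q`-fractional partition: measurable functions `ρ i : [0,1] → [0,1]`
summing pointwise to `1` on `[0,1]`. -/
structure FracPartition (q : ℕ) where
  toFun : Fin q → ℝ → ℝ
  measurable : ∀ i, Measurable (toFun i)
  mem_I01 : ∀ i x, x ∈ I01 → toFun i x ∈ I01
  sum_one : ∀ x ∈ I01, ∑ i, toFun i x = 1

/-- Energy of a fractional partition with respect to a graphon `W` and matrix `J`. -/
def energy {q : ℕ} (W : ℝ → ℝ → ℝ) (J : Matrix (Fin q) (Fin q) ℝ)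
    (ρ : FracPartition q) : ℝ :=
  - ∑ i, ∑ j, J i j * ∫ x in I01, ∫ y in I01, ρ.toFun i x * ρ.toFun j y * W x y

/-- `a` is a probability distribution on `Fin q`. -/
def IsDist {q : ℕ} (a : Fin q → ℝ) : Prop :=
  (∀ i, 0 ≤ a i) ∧ ∑ i, a i = 1

/-- Microcanonical ground state energy. -/
def mgse {q : ℕ} (W : ℝ → ℝ → ℝ) (J : Matrix (Fin q) (Fin q) ℝ) (a : Fin q → ℝ) : ℝ :=
  sInf {e | ∃ ρ : FracPartition q, (∀ i, (∫ x in I01, ρ.toFun i x) = a i) ∧ e = energy W J ρ}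

/-- General lower threshold ground state energy with threshold vector `x`. -/
def ltgseV {q : ℕ} (W : ℝ → ℝ → ℝ) (J : Matrix (Fin q) (Fin q) ℝ) (x : Fin q → ℝ) : ℝ :=
  sInf {e | ∃ a : Fin q → ℝ, IsDist a ∧ (∀ i, x i ≤ a i) ∧ e = mgse W J a}

/-- Homogeneous lower threshold ground state energy with scalar threshold `c`. -/
def ltgse {q : ℕ} (W : ℝ → ℝ → ℝ) (J : Matrix (Fin q) (Fin q) ℝ) (c : ℝ) : ℝ :=
  ltgseV W J (fun _ => c)

/-- Unrestricted ground state energy. -/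
def gse {q : ℕ} (W : ℝ → ℝ → ℝ) (J : Matrix (Fin q) (Fin q) ℝ) : ℝ :=
  sInf {e | ∃ ρ : FracPartition q, e = energy W J ρ}

/-- `W` is a graphon: a bounded symmetric measurable function. -/
def IsGraphon (W : ℝ → ℝ → ℝ) : Prop :=
  Measurable (Function.uncurry W) ∧ (∀ x y, W x y = W y x) ∧ ∃ M, ∀ x y, |W x y| ≤ M

open scoped Classical in
/-- Block-diagonal graphon: `β₁` on `[0,α]²`, `β₂` on `(α,1]²`, `0` elsewhere. -/
def blockW (α β₁ β₂ : ℝ) : ℝ → ℝ → ℝ :=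
  fun x y => if x ≤ α ∧ y ≤ α then β₁ else if α < x ∧ α < y then β₂ else 0

/-!
The block graphon is rank one, `W = w ⊗ w` with the probability density `w = α⁻¹ 𝟙[0,α]`,
so the energy of a fractional partition `ρ` is the energy, in the constant graphon `1`, of the
distribution `uᵢ = ∫ ρᵢ w`; this bounds `E^{h/q}(W, J)` below by `E(𝟙, J)`. Conversely every
distribution `u` arises this way from `ρ = u` on `[0, α]` and `ρ` uniform on `(α, 1]`: that part
is invisible to `W` and gives every state mass at least `(1 - α)/q ≥ h/q`.
-/

def distEnergy {q : ℕ} (J : Matrix (Fin q) (Fin q) ℝ) (u : Fin q → ℝ) : ℝ :=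
  - ∑ i, ∑ j, J i j * (u i * u j)

def distGse {q : ℕ} (J : Matrix (Fin q) (Fin q) ℝ) : ℝ :=
  sInf {e | ∃ u : Fin q → ℝ, IsDist u ∧ e = distEnergy J u}

structure IsProbDensity (w : ℝ → ℝ) : Prop where
  integrableOn : IntegrableOn w I01
  nonneg : ∀ x ∈ I01, 0 ≤ w x
  integral_eq_one : ∫ x in I01, w x = 1

lemma measurableSet_I01 : MeasurableSet I01 := measurableSet_Icc

lemma volume_I01 : volume I01 = 1 := by
  simp [I01, Real.volume_Icc]

lemma setIntegral_I01_const (c : ℝ) : ∫ _ in I01, c = c := by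
  simp [measureReal_def, volume_I01]

lemma integrableOn_I01_const (c : ℝ) : IntegrableOn (fun _ => c) I01 :=
  integrableOn_const (by simp [volume_I01])

lemma isProbDensity_one : IsProbDensity fun _ => 1 :=
  ⟨integrableOn_I01_const 1, fun _ _ => zero_le_one, setIntegral_I01_const 1⟩

lemma setIntegral_I01_ite_le {α : ℝ} (hα0 : 0 ≤ α) (hα1 : α ≤ 1) (a b : ℝ) :
    ∫ x in I01, (if x ≤ α then a else b) = α * a + (1 - α) * b := by
  have hsplit : (fun x : ℝ => if x ≤ α then a else b)
      = fun x => b + (Set.Iic α).indicator (fun _ => a - b) x := by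
    funext x
    by_cases hx : x ≤ α <;> simp [hx]
  have hinter : I01 ∩ Set.Iic α = Set.Icc 0 α := by
    ext x
    simp only [I01, Set.mem_inter_iff, Set.mem_Icc, Set.mem_Iic]
    constructor
    · rintro ⟨⟨hx0, -⟩, hxα⟩
      exact ⟨hx0, hxα⟩
    · rintro ⟨hx0, hxα⟩
      exact ⟨⟨hx0, hxα.trans hα1⟩, hxα⟩
  rw [hsplit, integral_add (integrableOn_I01_const b)
    ((integrableOn_I01_const (a - b)).indicator measurableSet_Iic),
    setIntegral_I01_const, setIntegral_indicator measurableSet_Iic, hinter,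
    setIntegral_const, measureReal_def, Real.volume_Icc, ENNReal.toReal_ofReal (by linarith)]
  simp only [sub_zero, smul_eq_mul]
  ring

lemma IsDist.le_one {q : ℕ} {u : Fin q → ℝ} (hu : IsDist u) (i : Fin q) : u i ≤ 1 :=
  hu.2 ▸ Finset.single_le_sum (fun j _ => hu.1 j) (Finset.mem_univ i)

lemma isDist_uniform {q : ℕ} (hq : 1 ≤ q) : IsDist fun _ : Fin q => (q : ℝ)⁻¹ := by
  have hq0 : (q : ℝ) ≠ 0 := by positivity
  refine ⟨fun _ => by positivity, ?_⟩
  simp [hq0]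

lemma neg_sum_abs_le_distEnergy {q : ℕ} (J : Matrix (Fin q) (Fin q) ℝ) {u : Fin q → ℝ}
    (hu : IsDist u) : -∑ i, ∑ j, |J i j| ≤ distEnergy J u := by
  refine neg_le_neg (Finset.sum_le_sum fun i _ => Finset.sum_le_sum fun j _ => ?_)
  have hp0 : 0 ≤ u i * u j := mul_nonneg (hu.1 i) (hu.1 j)
  have hp1 : u i * u j ≤ 1 := mul_le_one₀ (hu.le_one i) (hu.1 j) (hu.le_one j)
  calc J i j * (u i * u j) ≤ |J i j| * (u i * u j) := by gcongr; exact le_abs_self _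
    _ ≤ |J i j| * 1 := by gcongr
    _ = |J i j| := mul_one _

lemma bddBelow_distEnergy {q : ℕ} (J : Matrix (Fin q) (Fin q) ℝ) :
    BddBelow {e | ∃ u : Fin q → ℝ, IsDist u ∧ e = distEnergy J u} := by
  refine ⟨-∑ i, ∑ j, |J i j|, ?_⟩
  rintro _ ⟨u, hu, rfl⟩
  exact neg_sum_abs_le_distEnergy J hu

namespace FracPartition

variable {q : ℕ}

def weightedMass (ρ : FracPartition q) (w : ℝ → ℝ) (i : Fin q) : ℝ :=
  ∫ x in I01, ρ.toFun i x * w x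

def mass (ρ : FracPartition q) (i : Fin q) : ℝ :=
  ∫ x in I01, ρ.toFun i x

lemma weightedMass_one (ρ : FracPartition q) : ρ.weightedMass (fun _ => 1) = ρ.mass := by
  funext i
  simp [weightedMass, mass]

lemma isDist_weightedMass (ρ : FracPartition q) {w : ℝ → ℝ} (hw : IsProbDensity w) :
    IsDist (ρ.weightedMass w) := by
  have hint : ∀ i, IntegrableOn (fun x => ρ.toFun i x * w x) I01 := fun i =>
    hw.integrableOn.bdd_mul (ρ.measurable i).aestronglyMeasurable
      ((ae_restrict_mem measurableSet_I01).mono fun x hx => by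
        have := ρ.mem_I01 i x hx
        rw [Real.norm_eq_abs, abs_le]
        exact ⟨by linarith [this.1], this.2⟩)
  refine ⟨fun i => setIntegral_nonneg measurableSet_I01 fun x hx =>
    mul_nonneg (ρ.mem_I01 i x hx).1 (hw.nonneg x hx), ?_⟩
  calc ∑ i, ρ.weightedMass w i = ∫ x in I01, ∑ i, ρ.toFun i x * w x :=
        (integral_finsetSum _ fun i _ => hint i).symm
    _ = ∫ x in I01, w x := setIntegral_congr_fun measurableSet_I01 fun x hx => by
        simp only [← Finset.sum_mul, ρ.sum_one x hx, one_mul]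
    _ = 1 := hw.integral_eq_one

lemma isDist_mass (ρ : FracPartition q) : IsDist ρ.mass :=
  ρ.weightedMass_one ▸ ρ.isDist_weightedMass isProbDensity_one

def ofDist (u : Fin q → ℝ) (hu : IsDist u) : FracPartition q where
  toFun i _ := u i
  measurable _ := measurable_const
  mem_I01 i _ _ := ⟨hu.1 i, hu.le_one i⟩
  sum_one _ _ := hu.2

lemma weightedMass_ofDist {u : Fin q → ℝ} (hu : IsDist u) {w : ℝ → ℝ}
    (hw : IsProbDensity w) : (ofDist u hu).weightedMass w = u := by
  funext i
  simp [weightedMass, ofDist, integral_const_mul, hw.integral_eq_one]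

lemma mass_ofDist {u : Fin q → ℝ} (hu : IsDist u) : (ofDist u hu).mass = u := by
  rw [← weightedMass_one, weightedMass_ofDist hu isProbDensity_one]

open scoped Classical in
def split (α : ℝ) (u v : Fin q → ℝ) (hu : IsDist u) (hv : IsDist v) : FracPartition q where
  toFun i x := if x ≤ α then u i else v i
  measurable _ := Measurable.ite measurableSet_Iic measurable_const measurable_const
  mem_I01 i x _ := by
    split_ifs
    exacts [⟨hu.1 i, hu.le_one i⟩, ⟨hv.1 i, hv.le_one i⟩]
  sum_one x _ := by
    split_ifs
    exacts [hu.2, hv.2]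

lemma mass_split {α : ℝ} (hα0 : 0 ≤ α) (hα1 : α ≤ 1) {u v : Fin q → ℝ} (hu : IsDist u)
    (hv : IsDist v) (i : Fin q) : (split α u v hu hv).mass i = α * u i + (1 - α) * v i :=
  setIntegral_I01_ite_le hα0 hα1 (u i) (v i)

end FracPartition

open FracPartition

section RankOne

variable {q : ℕ} {W : ℝ → ℝ → ℝ} {w : ℝ → ℝ} (J : Matrix (Fin q) (Fin q) ℝ)

lemma energy_eq_distEnergy (hW : ∀ x y, W x y = w x * w y) (ρ : FracPartition q) :
    energy W J ρ = distEnergy J (ρ.weightedMass w) := by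
  unfold energy distEnergy weightedMass
  congr 1
  refine Finset.sum_congr rfl fun i _ => Finset.sum_congr rfl fun j _ => ?_
  congr 1
  calc ∫ x in I01, ∫ y in I01, ρ.toFun i x * ρ.toFun j y * W x y
      = ∫ x in I01, (ρ.toFun i x * w x) * ∫ y in I01, ρ.toFun j y * w y := by
        refine integral_congr_ae (ae_of_all _ fun x => ?_)
        simp only [← integral_const_mul, hW]
        exact integral_congr_ae (ae_of_all _ fun y => by ring)
    _ = _ := integral_mul_const _ _

variable (hw : IsProbDensity w) (hW : ∀ x y, W x y = w x * w y)
include hw hW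

lemma distGse_le_energy (ρ : FracPartition q) : distGse J ≤ energy W J ρ :=
  energy_eq_distEnergy J hW ρ ▸
    csInf_le (bddBelow_distEnergy J) ⟨_, ρ.isDist_weightedMass hw, rfl⟩

lemma distGse_le_mgse {a : Fin q → ℝ} (ha : IsDist a) : distGse J ≤ mgse W J a := by
  refine le_csInf ⟨_, ofDist a ha, fun i => congrFun (mass_ofDist ha) i, rfl⟩ ?_
  rintro _ ⟨ρ, -, rfl⟩
  exact distGse_le_energy J hw hW ρ

lemma mgse_mass_le_energy (ρ : FracPartition q) : mgse W J ρ.mass ≤ energy W J ρ :=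
  csInf_le ⟨distGse J, by rintro _ ⟨σ, -, rfl⟩; exact distGse_le_energy J hw hW σ⟩
    ⟨ρ, fun _ => rfl, rfl⟩

lemma distGse_le_ltgseV {x : Fin q → ℝ} (hx : ∃ a, IsDist a ∧ ∀ i, x i ≤ a i) :
    distGse J ≤ ltgseV W J x := by
  obtain ⟨a, ha, hxa⟩ := hx
  refine le_csInf ⟨_, a, ha, hxa, rfl⟩ ?_
  rintro _ ⟨b, hb, -, rfl⟩
  exact distGse_le_mgse J hw hW hb

lemma ltgseV_le_energy {x : Fin q → ℝ} {ρ : FracPartition q} (hρ : ∀ i, x i ≤ ρ.mass i) :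
    ltgseV W J x ≤ energy W J ρ := by
  have hbdd : BddBelow {e | ∃ a, IsDist a ∧ (∀ i, x i ≤ a i) ∧ e = mgse W J a} := by
    refine ⟨distGse J, ?_⟩
    rintro _ ⟨a, ha, -, rfl⟩
    exact distGse_le_mgse J hw hW ha
  exact (csInf_le hbdd ⟨_, ρ.isDist_mass, hρ, rfl⟩).trans (mgse_mass_le_energy J hw hW ρ)

end RankOne

lemma gse_one_eq_distGse {q : ℕ} (J : Matrix (Fin q) (Fin q) ℝ) :
    gse (fun _ _ => (1 : ℝ)) J = distGse J := by
  have henergy : ∀ ρ : FracPartition q, energy (fun _ _ => (1 : ℝ)) J ρ = distEnergy J ρ.mass :=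
    fun ρ => by rw [energy_eq_distEnergy J (w := fun _ => 1) (fun _ _ => (mul_one 1).symm),
      weightedMass_one]
  unfold gse distGse
  congr 1
  ext e
  constructor
  · rintro ⟨ρ, rfl⟩
    exact ⟨ρ.mass, ρ.isDist_mass, henergy ρ⟩
  · rintro ⟨u, hu, rfl⟩
    exact ⟨ofDist u hu, by rw [henergy, mass_ofDist]⟩

lemma blockW_eq_mul (α : ℝ) (x y : ℝ) :
    blockW α (1 / α ^ 2) 0 x y = (if x ≤ α then α⁻¹ else 0) * (if y ≤ α then α⁻¹ else 0) := by
  by_cases hx : x ≤ α <;> by_cases hy : y ≤ α <;> simp [blockW, hx, hy, sq]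

section Block

variable {α : ℝ}

lemma isProbDensity_block (hα0 : 0 < α) (hα1 : α ≤ 1) :
    IsProbDensity fun x => if x ≤ α then α⁻¹ else 0 where
  integrableOn := by
    refine ((integrableOn_I01_const α⁻¹).indicator (measurableSet_Iic (a := α))).congr_fun
      (fun x _ => ?_) measurableSet_I01
    by_cases hx : x ≤ α <;> simp [hx]
  nonneg x _ := by split_ifs <;> positivity
  integral_eq_one := by
    rw [setIntegral_I01_ite_le hα0.le hα1]
    field_simp
    ring

lemma weightedMass_split_block (hα0 : 0 < α) (hα1 : α ≤ 1) {q : ℕ} {u v : Fin q → ℝ}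
    (hu : IsDist u) (hv : IsDist v) :
    (split α u v hu hv).weightedMass (fun x => if x ≤ α then α⁻¹ else 0) = u := by
  funext i
  have hprod : ∀ x, (split α u v hu hv).toFun i x * (if x ≤ α then α⁻¹ else 0)
      = if x ≤ α then u i * α⁻¹ else 0 := fun x => by
    by_cases hx : x ≤ α <;> simp [split, hx]
  simp only [weightedMass, hprod, setIntegral_I01_ite_le hα0.le hα1]
  field_simp
  ring

end Block

theorem stmt13_general (α h : ℝ) (hα0 : 0 < α) (hα1 : α ≤ 1)
    (hhα : h ≤ 1 - α) (q : ℕ) (hq : 1 ≤ q) (J : Matrix (Fin q) (Fin q) ℝ) :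
    ltgse (blockW α (1 / α ^ 2) 0) J (h / q) = gse (fun _ _ => (1 : ℝ)) J := by
  have hw := isProbDensity_block hα0 hα1
  have hW := blockW_eq_mul α
  have hunif := isDist_uniform hq
  have hthr : ∀ u (hu : IsDist u) i, h / q ≤ (split α u _ hu hunif).mass i := fun u hu i => by
    have : h * (q : ℝ)⁻¹ ≤ (1 - α) * (q : ℝ)⁻¹ := by gcongr
    rw [mass_split hα0.le hα1, div_eq_mul_inv]
    linarith [mul_nonneg hα0.le (hu.1 i)]
  rw [gse_one_eq_distGse]
  refine le_antisymm (le_csInf ⟨_, _, hunif, rfl⟩ ?_)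
    (distGse_le_ltgseV J hw hW ⟨_, isDist_mass _, hthr _ hunif⟩)
  rintro _ ⟨u, hu, rfl⟩
  calc ltgse (blockW α (1 / α ^ 2) 0) J (h / q) ≤ energy _ J (split α u _ hu hunif) :=
        ltgseV_le_energy J hw hW (hthr u hu)
    _ = distEnergy J u := by rw [energy_eq_distEnergy J hW, weightedMass_split_block hα0 hα1]

theorem stmt13 (α h : ℝ) (hα0 : 0 < α) (hα1 : α ≤ 1) (hh0 : 0 ≤ h) (hh1 : h ≤ 1)
    (hhα : h ≤ 1 - α) (q : ℕ) (hq : 1 ≤ q) (J : Matrix (Fin q) (Fin q) ℝ)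
    (hJ : J.IsSymm) :
    ltgse (blockW α (1 / α ^ 2) 0) J (h / q) = gse (fun _ _ => (1 : ℝ)) J :=
  stmt13_general α h hα0 hα1 hhα q hq J
end
end

section
/- Let W be the block-diagonal graphon with parameters 0 < α < 1, β₁, β₂ ≥ 0: W = β₁ on [0,α]², W = β₂ on (α,1]², 0 elsewhere. Let q = 2 and J the 2×2 matrix with zero diagonal and off-diagonal entries 1 (MAXCUT matrix). Then the ground state energy satisfies −E(W,J) = (α²β₁ + (1−α)²β₂)/2. -/
open MeasureTheory Filter

noncomputable section

/-! Since `blockW α β₁ β₂ x y = β₁ 1_A(x) 1_A(y) + β₂ 1_B(x) 1_B(y)` with `A = [0, α]`,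
`B = (α, 1]`, the MAXCUT energy of `ρ` is `-2 (β₁ a₀ a₁ + β₂ b₀ b₁)`, where `aᵢ`, `bᵢ` are the
masses of `ρᵢ` on `A` and `B`. As `a₀ + a₁ = |A|` and `b₀ + b₁ = |B|`, AM-GM bounds this below by
`-(β₁ |A|² + β₂ |B|²) / 2`, with equality for the constant partition `ρ₀ = ρ₁ = 1/2`. -/

open Set

namespace FracPartition

variable {q : ℕ}

def uniform (q : ℕ) [NeZero q] : FracPartition q where
  toFun _ _ := 1 / q
  measurable _ := measurable_const
  mem_I01 _ _ _ := ⟨by positivity, div_le_one_of_le₀ (by simpa using NeZero.one_le) (by positivity)⟩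
  sum_one _ _ := by simp [NeZero.ne q]

theorem integrableOn (ρ : FracPartition q) (i : Fin q) : IntegrableOn (ρ.toFun i) I01 :=
  Measure.integrableOn_of_bounded (M := 1) (by simp [I01])
    (ρ.measurable i).aestronglyMeasurable <| by
      filter_upwards [ae_restrict_mem measurableSet_Icc] with x hx
      obtain ⟨h0, h1⟩ := ρ.mem_I01 i x hx
      rwa [Real.norm_of_nonneg h0]

theorem sum_setIntegral (ρ : FracPartition q) {s : Set ℝ} (hs : MeasurableSet s)
    (hsI : s ⊆ I01) : ∑ i, ∫ x in s, ρ.toFun i x = volume.real s := by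
  rw [← integral_finsetSum _ fun i _ => (ρ.integrableOn i).mono_set hsI,
    setIntegral_congr_fun hs fun x hx => ρ.sum_one x (hsI hx), setIntegral_const, smul_eq_mul,
    mul_one]

end FracPartition

theorem energy_maxcut (W : ℝ → ℝ → ℝ) (ρ : FracPartition 2) :
    energy W !![0, 1; 1, 0] ρ =
      -((∫ x in I01, ∫ y in I01, ρ.toFun 0 x * ρ.toFun 1 y * W x y) +
        ∫ x in I01, ∫ y in I01, ρ.toFun 1 x * ρ.toFun 0 y * W x y) := by
  simp [energy, Fin.sum_univ_two]

theorem blockW_eq_indicator (α β₁ β₂ x y : ℝ) :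
    blockW α β₁ β₂ x y =
      β₁ * ((Iic α).indicator 1 x * (Iic α).indicator 1 y) +
        β₂ * ((Ioi α).indicator 1 x * (Ioi α).indicator 1 y) := by
  rcases le_or_gt x α with hx | hx <;> rcases le_or_gt y α with hy | hy <;>
    simp [blockW, indicator, hx, hy, not_lt.2, not_le.2]

theorem setIntegral_setIntegral_mul_blockW (α β₁ β₂ : ℝ) {f g : ℝ → ℝ}
    (hf : IntegrableOn f I01) (hg : IntegrableOn g I01) :
    ∫ x in I01, ∫ y in I01, f x * g y * blockW α β₁ β₂ x y =
      β₁ * ((∫ x in I01 ∩ Iic α, f x) * ∫ y in I01 ∩ Iic α, g y) +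
        β₂ * ((∫ x in I01 ∩ Ioi α, f x) * ∫ y in I01 ∩ Ioi α, g y) := by
  set fA := (Iic α).indicator f
  set gA := (Iic α).indicator g
  set fB := (Ioi α).indicator f
  set gB := (Ioi α).indicator g
  have hfA : IntegrableOn fA I01 := hf.indicator measurableSet_Iic
  have hgA : IntegrableOn gA I01 := hg.indicator measurableSet_Iic
  have hfB : IntegrableOn fB I01 := hf.indicator measurableSet_Ioi
  have hgB : IntegrableOn gB I01 := hg.indicator measurableSet_Ioi
  have hsplit : ∀ x y, f x * g y * blockW α β₁ β₂ x y =
      β₁ * (fA x * gA y) + β₂ * (fB x * gB y) := by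
    intro x y
    simp only [blockW_eq_indicator, fA, gA, fB, gB, indicator, Pi.one_apply]
    split_ifs <;> ring
  calc ∫ x in I01, ∫ y in I01, f x * g y * blockW α β₁ β₂ x y
      = ∫ x in I01, β₁ * (fA x * ∫ y in I01, gA y) + β₂ * (fB x * ∫ y in I01, gB y) := by
        congr 1 with x
        simp_rw [hsplit]
        rw [integral_add ((hgA.const_mul _).const_mul _) ((hgB.const_mul _).const_mul _)]
        simp_rw [integral_const_mul]
    _ = β₁ * ((∫ x in I01, fA x) * ∫ y in I01, gA y) +
          β₂ * ((∫ x in I01, fB x) * ∫ y in I01, gB y) := by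
        rw [integral_add ((hfA.mul_const _).const_mul _) ((hfB.mul_const _).const_mul _)]
        simp_rw [integral_const_mul, integral_mul_const]
    _ = _ := by
        simp only [fA, gA, fB, gB, setIntegral_indicator measurableSet_Iic,
          setIntegral_indicator measurableSet_Ioi]

section Block

variable (α β₁ β₂ : ℝ)

theorem energy_blockW_maxcut (ρ : FracPartition 2) :
    energy (blockW α β₁ β₂) !![0, 1; 1, 0] ρ =
      -(2 * (β₁ * ((∫ x in I01 ∩ Iic α, ρ.toFun 0 x) * ∫ x in I01 ∩ Iic α, ρ.toFun 1 x) +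
        β₂ * ((∫ x in I01 ∩ Ioi α, ρ.toFun 0 x) * ∫ x in I01 ∩ Ioi α, ρ.toFun 1 x))) := by
  rw [energy_maxcut,
    setIntegral_setIntegral_mul_blockW _ _ _ (ρ.integrableOn 0) (ρ.integrableOn 1),
    setIntegral_setIntegral_mul_blockW _ _ _ (ρ.integrableOn 1) (ρ.integrableOn 0)]
  ring

variable {α β₁ β₂}

theorem neg_volume_sq_le_energy_blockW_maxcut (hβ₁ : 0 ≤ β₁) (hβ₂ : 0 ≤ β₂)
    (ρ : FracPartition 2) :
    -(β₁ * volume.real (I01 ∩ Iic α) ^ 2 + β₂ * volume.real (I01 ∩ Ioi α) ^ 2) / 2 ≤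
      energy (blockW α β₁ β₂) !![0, 1; 1, 0] ρ := by
  have hA := ρ.sum_setIntegral (s := I01 ∩ Iic α) (measurableSet_Icc.inter measurableSet_Iic)
    inter_subset_left
  have hB := ρ.sum_setIntegral (s := I01 ∩ Ioi α) (measurableSet_Icc.inter measurableSet_Ioi)
    inter_subset_left
  rw [Fin.sum_univ_two] at hA hB
  rw [energy_blockW_maxcut, ← hA, ← hB]
  -- `4 a b ≤ (a + b) ^ 2` on each block
  nlinarith [mul_nonneg hβ₁ (sq_nonneg ((∫ x in I01 ∩ Iic α, ρ.toFun 0 x) -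
      ∫ x in I01 ∩ Iic α, ρ.toFun 1 x)),
    mul_nonneg hβ₂ (sq_nonneg ((∫ x in I01 ∩ Ioi α, ρ.toFun 0 x) -
      ∫ x in I01 ∩ Ioi α, ρ.toFun 1 x))]

variable (α β₁ β₂)

theorem energy_blockW_maxcut_uniform :
    energy (blockW α β₁ β₂) !![0, 1; 1, 0] (FracPartition.uniform 2) =
      -(β₁ * volume.real (I01 ∩ Iic α) ^ 2 + β₂ * volume.real (I01 ∩ Ioi α) ^ 2) / 2 := by
  rw [energy_blockW_maxcut]
  simp only [FracPartition.uniform, setIntegral_const, smul_eq_mul]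
  ring

theorem gse_blockW_maxcut (hβ₁ : 0 ≤ β₁) (hβ₂ : 0 ≤ β₂) :
    gse (blockW α β₁ β₂) !![0, 1; 1, 0] =
      -(β₁ * volume.real (I01 ∩ Iic α) ^ 2 + β₂ * volume.real (I01 ∩ Ioi α) ^ 2) / 2 :=
  IsLeast.csInf_eq
    ⟨⟨_, (energy_blockW_maxcut_uniform α β₁ β₂).symm⟩,
      fun _ ⟨ρ, he⟩ => he ▸ neg_volume_sq_le_energy_blockW_maxcut hβ₁ hβ₂ ρ⟩

end Block

theorem I01_inter_Iic {α : ℝ} (h : α ≤ 1) : I01 ∩ Iic α = Icc 0 α := by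
  ext x
  simp only [I01, mem_inter_iff, mem_Icc, mem_Iic]
  grind

theorem I01_inter_Ioi {α : ℝ} (h : 0 ≤ α) : I01 ∩ Ioi α = Ioc α 1 := by
  ext x
  simp only [I01, mem_inter_iff, mem_Icc, mem_Ioi, mem_Ioc]
  grind

theorem stmt15 (α β₁ β₂ : ℝ) (hα0 : 0 < α) (hα1 : α < 1)
    (hβ₁ : 0 ≤ β₁) (hβ₂ : 0 ≤ β₂) :
    -gse (blockW α β₁ β₂) (!![0, 1; 1, 0] : Matrix (Fin 2) (Fin 2) ℝ) =
      (α ^ 2 * β₁ + (1 - α) ^ 2 * β₂) / 2 := by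
  rw [gse_blockW_maxcut α β₁ β₂ hβ₁ hβ₂, I01_inter_Iic hα1.le, I01_inter_Ioi hα0.le,
    Real.volume_real_Icc_of_le hα0.le, Real.volume_real_Ioc_of_le hα1.le]
  ring
end
end
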